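/- (Interaction estimand identification) Under the model Y_t(z_{t:1}) = Σ_{k=0}^{t-1} β_k z_{t-k} + Σ_{k=1}^{t-1} β_{k-1,k} z_{t-k} z_{t-k+1} + ε_t with i.i.d. Bernoulli(p) treatments, the lag-k main estimand τ_k := (T−K)^{-1} Σ_{t=K+1}^T E[Y_t with Z_{t-k}=1] − E[Y_t with Z_{t-k}=0] equals β_k + p·β_{k-1,k}·1(k≠0) + p·β_{k,k+1}·1(k≠t−1 for all relevant t), and the interaction estimand τ_{k-1,k} := (T−K)^{-1} Σ_{t=K+1}^T E[Y(1,1) − Y(1,0) − Y(0,1) + Y(0,0) at lags k−1,k] equals β_{k-1,k}. -/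
import Mathlib


/-- Expectation of a functional of a path of independent Bernoulli treatments
`Z_0,...,Z_{T-1}` with `P(Z_t = true) = p_t` (times `≥ T` are padded with `false`). -/
noncomputable def Exp (T : ℕ) (p : ℕ → ℝ) (g : (ℕ → Bool) → ℝ) : ℝ :=
  ∑ z : Fin T → Bool,
    (∏ t : Fin T, if z t then p t.val else 1 - p t.val) *
      g (fun n => if h : n < T then z ⟨n, h⟩ else false)

lemma sum_prod_bool {T : ℕ} (g : Fin T → Bool → ℝ) :
    ∑ z : Fin T → Bool, ∏ t, g t (z t) = ∏ t, ∑ b, g t b := by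
  classical
  rw [Finset.prod_univ_sum]
  rw [Fintype.piFinset_univ]

lemma weights_sum (T : ℕ) (p : ℕ → ℝ) :
    ∑ z : Fin T → Bool, (∏ t : Fin T, if z t then p t.val else 1 - p t.val) = 1 := by
  rw [sum_prod_bool (fun t b => if b then p t.val else 1 - p t.val)]
  rw [Finset.prod_eq_one]
  intro t _
  simp

lemma Exp_const (T : ℕ) (p : ℕ → ℝ) (c : ℝ) : Exp T p (fun _ => c) = c := by
  simp [Exp, ← Finset.sum_mul, weights_sum]

lemma Exp_sub (T : ℕ) (p : ℕ → ℝ) (g h : (ℕ → Bool) → ℝ) :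
    Exp T p (fun z => g z - h z) = Exp T p g - Exp T p h := by
  simp [Exp, mul_sub, Finset.sum_sub_distrib]

lemma Exp_add (T : ℕ) (p : ℕ → ℝ) (g h : (ℕ → Bool) → ℝ) :
    Exp T p (fun z => g z + h z) = Exp T p g + Exp T p h := by
  simp [Exp, mul_add, Finset.sum_add_distrib]

lemma Exp_mul_const (T : ℕ) (p : ℕ → ℝ) (c : ℝ) (g : (ℕ → Bool) → ℝ) :
    Exp T p (fun z => c * g z) = c * Exp T p g := by
  simp [Exp, Finset.mul_sum, mul_left_comm]

lemma Exp_ind (T : ℕ) (p : ℝ) (n : ℕ) (hn : n < T) :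
    Exp T (fun _ => p) (fun z => if z n then (1:ℝ) else 0) = p := by
  classical
  unfold Exp
  simp only [dif_pos hn]
  have key : ∀ z : Fin T → Bool,
      (∏ t : Fin T, if z t then p else 1 - p) * (if z ⟨n, hn⟩ then (1:ℝ) else 0)
      = ∏ t : Fin T, ((if z t then p else 1 - p) * (if t = ⟨n, hn⟩ then (if z t then (1:ℝ) else 0) else 1)) := by
    intro z
    rw [Finset.prod_mul_distrib, Finset.prod_ite_eq' Finset.univ (⟨n, hn⟩ : Fin T)
      (fun t => if z t then (1:ℝ) else 0)]
    simp
  simp only [key]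
  rw [sum_prod_bool (fun t b => (if b then p else 1 - p) * if t = ⟨n, hn⟩ then (if b then (1:ℝ) else 0) else 1)]
  rw [Finset.prod_eq_single_of_mem (⟨n, hn⟩ : Fin T) (Finset.mem_univ _)]
  · simp
  · intro t _ ht
    simp [ht]

lemma Exp_comb (T : ℕ) (P : ℕ → ℝ) (c1 c2 c3 : ℝ) (g h : (ℕ → Bool) → ℝ) :
    Exp T P (fun z => c1 + c2 * g z + c3 * h z)
      = c1 + c2 * Exp T P g + c3 * Exp T P h := by
  have h1 : Exp T P (fun z => c1 + c2 * g z + c3 * h z)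
      = Exp T P (fun z => c1 + c2 * g z) + Exp T P (fun z => c3 * h z) :=
    Exp_add T P (fun z => c1 + c2 * g z) (fun z => c3 * h z)
  have h2 : Exp T P (fun z => c1 + c2 * g z)
      = Exp T P (fun _ => c1) + Exp T P (fun z => c2 * g z) :=
    Exp_add T P (fun _ => c1) (fun z => c2 * g z)
  rw [h1, h2, Exp_const, Exp_mul_const, Exp_mul_const]

/-- (Interaction estimand identification) Under the model
`Y_t(z) = Σ_{j=0}^{t} β_j z_{t-j} + Σ_{j=1}^{t} γ_j z_{t-j} z_{t-j+1} + ε_t`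
(where `γ_j` encodes the interaction `β_{j-1,j}`) with i.i.d. Bernoulli(p)
treatments indexed by times `0,...,T-1`:
the lag-`k` main estimand equals `β_k + p·γ_k·1(k≠0) + p·γ_{k+1}` (for `k < K`,
i.e. whenever `k` is never the oldest time in the averaging window), and the
interaction estimand at lags `(k-1,k)` equals `γ_k` for `1 ≤ k ≤ K`. -/
theorem stmt13 (T K : ℕ) (hKT : K < T)
    (p : ℝ) (hp0 : 0 < p) (hp1 : p < 1)
    (β γ : ℕ → ℝ) (ε : ℕ → ℝ)
    (Y : ℕ → (ℕ → Bool) → ℝ)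
    (hY : ∀ t (z : ℕ → Bool),
      Y t z = (∑ j ∈ Finset.range (t + 1), β j * (if z (t - j) then 1 else 0))
        + (∑ j ∈ Finset.Icc 1 t, γ j *
            (if z (t - j) then 1 else 0) * (if z (t - j + 1) then 1 else 0))
        + ε t) :
    let τmain : ℕ → ℝ := fun k => (T - K : ℝ)⁻¹ * ∑ t ∈ Finset.Ico K T,
      (Exp T (fun _ => p) (fun z => Y t (Function.update z (t - k) true))
        - Exp T (fun _ => p) (fun z => Y t (Function.update z (t - k) false)))
    let τint : ℕ → ℝ := fun k => (T - K : ℝ)⁻¹ * ∑ t ∈ Finset.Ico K T,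
      Exp T (fun _ => p) (fun z =>
        Y t (Function.update (Function.update z (t - k) true) (t - k + 1) true)
        - Y t (Function.update (Function.update z (t - k) true) (t - k + 1) false)
        - Y t (Function.update (Function.update z (t - k) false) (t - k + 1) true)
        + Y t (Function.update (Function.update z (t - k) false) (t - k + 1) false))
    (∀ k, k < K →
      τmain k = β k + p * γ k * (if k = 0 then 0 else 1) + p * γ (k + 1)) ∧
    (∀ k, 1 ≤ k → k ≤ K → τint k = γ k) := by
  intro τmain τint
  have hTK : ((T : ℝ) - K) ≠ 0 := by
    have : (K : ℝ) < T := by exact_mod_cast hKT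
    linarith
  constructor
  · -- main estimand
    intro k hk
    show (T - K : ℝ)⁻¹ * ∑ t ∈ Finset.Ico K T,
      (Exp T (fun _ => p) (fun z => Y t (Function.update z (t - k) true))
        - Exp T (fun _ => p) (fun z => Y t (Function.update z (t - k) false)))
      = β k + p * γ k * (if k = 0 then 0 else 1) + p * γ (k + 1)
    have hsum : ∀ t ∈ Finset.Ico K T,
        (Exp T (fun _ => p) (fun z => Y t (Function.update z (t - k) true))
          - Exp T (fun _ => p) (fun z => Y t (Function.update z (t - k) false)))
        = β k + p * γ k * (if k = 0 then 0 else 1) + p * γ (k + 1) := by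
      intro t ht
      obtain ⟨hKt, htT⟩ := Finset.mem_Ico.mp ht
      have hkt : k < t := lt_of_lt_of_le hk hKt
      have hdiff : ∀ z : ℕ → Bool,
          Y t (Function.update z (t - k) true) - Y t (Function.update z (t - k) false)
          = β k + (γ k * (if k = 0 then 0 else 1)) * (if z (t - k + 1) then 1 else 0)
            + γ (k + 1) * (if z (t - (k + 1)) then 1 else 0) := by
        intro z
        have e1 : (∑ j ∈ Finset.range (t + 1),
              β j * (if Function.update z (t - k) true (t - j) then (1:ℝ) else 0))
            - (∑ j ∈ Finset.range (t + 1),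
              β j * (if Function.update z (t - k) false (t - j) then (1:ℝ) else 0)) = β k := by
          rw [← Finset.sum_sub_distrib]
          rw [Finset.sum_eq_single_of_mem k (Finset.mem_range.mpr (by omega))]
          · simp [Function.update_self]
          · intro j hj hjk
            have hj' := Finset.mem_range.mp hj
            have hne : t - j ≠ t - k := by omega
            simp [Function.update_of_ne hne]
        have e2 : (∑ j ∈ Finset.Icc 1 t,
              γ j * (if Function.update z (t - k) true (t - j) then (1:ℝ) else 0)
                * (if Function.update z (t - k) true (t - j + 1) then (1:ℝ) else 0))
            - (∑ j ∈ Finset.Icc 1 t,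
              γ j * (if Function.update z (t - k) false (t - j) then (1:ℝ) else 0)
                * (if Function.update z (t - k) false (t - j + 1) then (1:ℝ) else 0))
            = (γ k * (if k = 0 then 0 else 1)) * (if z (t - k + 1) then 1 else 0)
              + γ (k + 1) * (if z (t - (k + 1)) then 1 else 0) := by
          rw [← Finset.sum_sub_distrib]
          have hcongr : ∀ j ∈ Finset.Icc 1 t,
              γ j * (if Function.update z (t - k) true (t - j) then (1:ℝ) else 0)
                * (if Function.update z (t - k) true (t - j + 1) then (1:ℝ) else 0)
              - γ j * (if Function.update z (t - k) false (t - j) then (1:ℝ) else 0)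
                * (if Function.update z (t - k) false (t - j + 1) then (1:ℝ) else 0)
              = (if j = k then γ k * (if z (t - k + 1) then (1:ℝ) else 0) else 0)
                + (if j = k + 1 then γ (k + 1) * (if z (t - (k + 1)) then (1:ℝ) else 0) else 0) := by
            intro j hj
            obtain ⟨hj1, hjt⟩ := Finset.mem_Icc.mp hj
            rcases eq_or_ne j k with rfl | hjk
            · have h1 : t - j + 1 ≠ t - j := by omega
              have h2 : j ≠ j + 1 := by omega
              simp [Function.update_self, Function.update_of_ne h1, h2]
            · rcases eq_or_ne j (k + 1) with rfl | hjk1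
              · have h1 : t - (k + 1) ≠ t - k := by omega
                have h2 : t - (k + 1) + 1 = t - k := by omega
                rw [h2]
                simp [Function.update_self, Function.update_of_ne h1, hjk]
              · have h1 : t - j ≠ t - k := by omega
                have h2 : t - j + 1 ≠ t - k := by omega
                simp [Function.update_of_ne h1, Function.update_of_ne h2, hjk, hjk1]
          rw [Finset.sum_congr rfl hcongr, Finset.sum_add_distrib,
            Finset.sum_ite_eq' (Finset.Icc 1 t) k,
            Finset.sum_ite_eq' (Finset.Icc 1 t) (k + 1)]
          have hk1mem : (k + 1) ∈ Finset.Icc 1 t := Finset.mem_Icc.mpr ⟨by omega, by omega⟩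
          rcases Nat.eq_zero_or_pos k with rfl | hkpos
          · simp [hk1mem]
          · have hkmem : k ∈ Finset.Icc 1 t := Finset.mem_Icc.mpr ⟨hkpos, by omega⟩
            have hk0 : k ≠ 0 := by omega
            simp [hkmem, hk1mem, hk0]
        rw [hY, hY]
        linear_combination e1 + e2
      rw [← Exp_sub]
      have hfun : (fun z : ℕ → Bool =>
            Y t (Function.update z (t - k) true) - Y t (Function.update z (t - k) false))
          = fun z => β k + (γ k * (if k = 0 then 0 else 1)) * (if z (t - k + 1) then 1 else 0)
            + γ (k + 1) * (if z (t - (k + 1)) then 1 else 0) := funext hdiff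
      rw [hfun, Exp_comb, Exp_ind T p (t - (k + 1)) (by omega)]
      rcases eq_or_ne k 0 with rfl | hk0
      · simp
        ring
      · rw [Exp_ind T p (t - k + 1) (by omega)]
        simp [hk0]
        ring
    rw [Finset.sum_congr rfl hsum, Finset.sum_const, Nat.card_Ico, nsmul_eq_mul,
      Nat.cast_sub hKT.le, inv_mul_cancel_left₀ hTK]
  · -- interaction estimand
    intro k hk1 hkK
    show (T - K : ℝ)⁻¹ * ∑ t ∈ Finset.Ico K T,
      Exp T (fun _ => p) (fun z =>
        Y t (Function.update (Function.update z (t - k) true) (t - k + 1) true)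
        - Y t (Function.update (Function.update z (t - k) true) (t - k + 1) false)
        - Y t (Function.update (Function.update z (t - k) false) (t - k + 1) true)
        + Y t (Function.update (Function.update z (t - k) false) (t - k + 1) false))
      = γ k
    have hsum : ∀ t ∈ Finset.Ico K T,
        Exp T (fun _ => p) (fun z =>
          Y t (Function.update (Function.update z (t - k) true) (t - k + 1) true)
          - Y t (Function.update (Function.update z (t - k) true) (t - k + 1) false)
          - Y t (Function.update (Function.update z (t - k) false) (t - k + 1) true)
          + Y t (Function.update (Function.update z (t - k) false) (t - k + 1) false))
        = γ k := by
      intro t ht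
      obtain ⟨hKt, htT⟩ := Finset.mem_Ico.mp ht
      have hkt : k ≤ t := le_trans hkK hKt
      have hdiff : ∀ z : ℕ → Bool,
          Y t (Function.update (Function.update z (t - k) true) (t - k + 1) true)
          - Y t (Function.update (Function.update z (t - k) true) (t - k + 1) false)
          - Y t (Function.update (Function.update z (t - k) false) (t - k + 1) true)
          + Y t (Function.update (Function.update z (t - k) false) (t - k + 1) false)
          = γ k := by
        intro z
        have e1 : (∑ j ∈ Finset.range (t + 1), β j *
              (if Function.update (Function.update z (t - k) true) (t - k + 1) true (t - j) then (1:ℝ) else 0))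
            - (∑ j ∈ Finset.range (t + 1), β j *
              (if Function.update (Function.update z (t - k) true) (t - k + 1) false (t - j) then (1:ℝ) else 0))
            - (∑ j ∈ Finset.range (t + 1), β j *
              (if Function.update (Function.update z (t - k) false) (t - k + 1) true (t - j) then (1:ℝ) else 0))
            + (∑ j ∈ Finset.range (t + 1), β j *
              (if Function.update (Function.update z (t - k) false) (t - k + 1) false (t - j) then (1:ℝ) else 0))
            = 0 := by
          rw [← Finset.sum_sub_distrib, ← Finset.sum_sub_distrib, ← Finset.sum_add_distrib]
          apply Finset.sum_eq_zero
          intro j hj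
          by_cases h1 : t - j = t - k + 1
          · rw [h1]
            simp
          · by_cases h2 : t - j = t - k
            · have h3 : t - k ≠ t - k + 1 := by omega
              rw [h2]
              simp [Function.update_of_ne h3]
            · simp [Function.update_of_ne h1, Function.update_of_ne h2]
        -- γ-part gives γ k
        have e2 : (∑ j ∈ Finset.Icc 1 t, γ j *
              (if Function.update (Function.update z (t - k) true) (t - k + 1) true (t - j) then (1:ℝ) else 0)
              * (if Function.update (Function.update z (t - k) true) (t - k + 1) true (t - j + 1) then (1:ℝ) else 0))
            - (∑ j ∈ Finset.Icc 1 t, γ j *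
              (if Function.update (Function.update z (t - k) true) (t - k + 1) false (t - j) then (1:ℝ) else 0)
              * (if Function.update (Function.update z (t - k) true) (t - k + 1) false (t - j + 1) then (1:ℝ) else 0))
            - (∑ j ∈ Finset.Icc 1 t, γ j *
              (if Function.update (Function.update z (t - k) false) (t - k + 1) true (t - j) then (1:ℝ) else 0)
              * (if Function.update (Function.update z (t - k) false) (t - k + 1) true (t - j + 1) then (1:ℝ) else 0))
            + (∑ j ∈ Finset.Icc 1 t, γ j *
              (if Function.update (Function.update z (t - k) false) (t - k + 1) false (t - j) then (1:ℝ) else 0)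
              * (if Function.update (Function.update z (t - k) false) (t - k + 1) false (t - j + 1) then (1:ℝ) else 0))
            = γ k := by
          rw [← Finset.sum_sub_distrib, ← Finset.sum_sub_distrib, ← Finset.sum_add_distrib]
          rw [Finset.sum_eq_single_of_mem k (Finset.mem_Icc.mpr ⟨hk1, hkt⟩)]
          · have h1 : t - k ≠ t - k + 1 := by omega
            simp [Function.update_self, Function.update_of_ne h1]
          · intro j hj hjk
            obtain ⟨hj1, hjt⟩ := Finset.mem_Icc.mp hj
            have hqa : t - j ≠ t - k := by omega
            by_cases hqb : t - j = t - k + 1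
            · have h3 : t - k + 1 + 1 ≠ t - k + 1 := by omega
              have h4 : t - k + 1 + 1 ≠ t - k := by omega
              rw [hqb]
              simp [Function.update_of_ne h3, Function.update_of_ne h4]
            · by_cases hq1a : t - j + 1 = t - k
              · have h3 : t - k ≠ t - k + 1 := by omega
                rw [hq1a]
                simp [Function.update_of_ne hqb, Function.update_of_ne hqa,
                  Function.update_of_ne h3]
              · have h3 : t - j + 1 ≠ t - k + 1 := by omega
                simp [Function.update_of_ne hqb, Function.update_of_ne hqa,
                  Function.update_of_ne h3, Function.update_of_ne hq1a]
        rw [hY, hY, hY, hY]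
        linear_combination e1 + e2
      have hfun : (fun z : ℕ → Bool =>
          Y t (Function.update (Function.update z (t - k) true) (t - k + 1) true)
          - Y t (Function.update (Function.update z (t - k) true) (t - k + 1) false)
          - Y t (Function.update (Function.update z (t - k) false) (t - k + 1) true)
          + Y t (Function.update (Function.update z (t - k) false) (t - k + 1) false))
          = fun _ => γ k := funext hdiff
      rw [hfun, Exp_const]
    rw [Finset.sum_congr rfl hsum, Finset.sum_const, Nat.card_Ico, nsmul_eq_mul,
      Nat.cast_sub hKT.le, inv_mul_cancel_left₀ hTK]
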